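/- arXiv:1612.03491 — 5 statements merged into one kernel-verified Lean document; each statement's English description precedes it below -/
import Mathlib

section
/- Let X = {(2^c a, 2^c b, 2^c) : a, b, c ∈ ℤ} ⊆ U, equipped with the hyperbolic metric d_H. Then X is uniformly discrete: any two distinct points of X are at hyperbolic distance at least log 2. -/
/-- `arccosh t = log (t + √(t² - 1))`. -/
noncomputable def arcosh (t : ℝ) : ℝ := Real.log (t + Real.sqrt (t ^ 2 - 1))

/-- The upper half-space `U = {p ∈ ℝ³ : p₃ > 0}`. -/
def upperHalfSpace : Set (ℝ × ℝ × ℝ) := {p | 0 < p.2.2}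

/-- The hyperbolic distance in the upper half-space model of `ℍ³`. -/
noncomputable def dH (p q : ℝ × ℝ × ℝ) : ℝ :=
  arcosh (1 + ((p.1 - q.1) ^ 2 + (p.2.1 - q.2.1) ^ 2 + (p.2.2 - q.2.2) ^ 2) /
    (2 * p.2.2 * q.2.2))

/-- The set `X = {(2^c a, 2^c b, 2^c) : a, b, c ∈ ℤ}`. -/
def Xset : Set (ℝ × ℝ × ℝ) :=
  {p | ∃ a b c : ℤ, p = ((2 : ℝ) ^ c * a, (2 : ℝ) ^ c * b, (2 : ℝ) ^ c)}

lemma log_two_le_arcosh {t : ℝ} (ht : 5/4 ≤ t) : Real.log 2 ≤ arcosh t := by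
  unfold arcosh
  have h1 : (3:ℝ)/4 ≤ Real.sqrt (t ^ 2 - 1) := by
    have : ((3:ℝ)/4) = Real.sqrt ((3/4)^2) := (Real.sqrt_sq (by norm_num)).symm
    rw [this]
    apply Real.sqrt_le_sqrt
    nlinarith
  have h2 : (2:ℝ) ≤ t + Real.sqrt (t ^ 2 - 1) := by linarith
  exact Real.log_le_log (by norm_num) h2

lemma sq_half {u v : ℝ} (hv : 0 < v) (h : 2 * v ≤ u) : u * v / 2 ≤ (u - v) ^ 2 := by
  nlinarith [mul_nonneg (by linarith : (0:ℝ) ≤ u - 2*v) (by linarith : (0:ℝ) ≤ u - v/2)]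

/-- The set `X = {(2^c a, 2^c b, 2^c) : a, b, c ∈ ℤ}` is uniformly
discrete for the hyperbolic metric: distinct points of `X` are at hyperbolic
distance at least `log 2`. -/
theorem Xset_uniformly_discrete :
    ∀ x ∈ Xset, ∀ y ∈ Xset, x ≠ y → Real.log 2 ≤ dH x y := by
  rintro x ⟨a, b, c, rfl⟩ y ⟨d, e, f, rfl⟩ hxy
  unfold dH
  simp only
  set u : ℝ := (2:ℝ) ^ c with hu
  set v : ℝ := (2:ℝ) ^ f with hv
  have hu0 : 0 < u := zpow_pos (by norm_num) c
  have hv0 : 0 < v := zpow_pos (by norm_num) f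
  apply log_two_le_arcosh
  have hD : 0 < 2 * u * v := by positivity
  have hs : u * v / 2 ≤ (u * a - v * d) ^ 2 + (u * b - v * e) ^ 2 + (u - v) ^ 2 := by
    rcases lt_trichotomy c f with hcf | hcf | hcf
    · have h2 : 2 * u ≤ v := by
        have := zpow_le_zpow_right₀ (by norm_num : (1:ℝ) ≤ 2) (by omega : c + 1 ≤ f)
        rwa [zpow_add_one₀ (by norm_num), mul_comm] at this
      have := sq_half hu0 h2
      nlinarith [sq_nonneg (u * a - v * d), sq_nonneg (u * b - v * e)]
    · subst hcf
      have huv : u = v := rfl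
      have hab : a ≠ d ∨ b ≠ e := by
        by_contra h
        push_neg at h
        exact hxy (by rw [huv, h.1, h.2])
      have key : ∀ m n : ℤ, m ≠ n → (1:ℝ) ≤ ((m:ℝ) - n) ^ 2 := by
        intro m n hmn
        have h1 : 1 ≤ |m - n| := Int.one_le_abs (sub_ne_zero.mpr hmn)
        have h2 : (1:ℤ) ≤ (m - n) ^ 2 := by nlinarith [sq_abs (m - n)]
        have := (Int.cast_le (R := ℝ)).mpr h2
        push_cast at this
        linarith
      rcases hab with h | h
      · have h1 := key a d h
        have : u * a - v * d = u * ((a:ℝ) - d) := by rw [huv]; ring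
        rw [this]
        nlinarith [sq_nonneg (u * b - v * e), sq_nonneg (u - v)]
      · have h1 := key b e h
        have : u * b - v * e = u * ((b:ℝ) - e) := by rw [huv]; ring
        rw [this]
        nlinarith [sq_nonneg (u * a - v * d), sq_nonneg (u - v)]
    · have h2 : 2 * v ≤ u := by
        have := zpow_le_zpow_right₀ (by norm_num : (1:ℝ) ≤ 2) (by omega : f + 1 ≤ c)
        rwa [zpow_add_one₀ (by norm_num), mul_comm] at this
      have := sq_half hv0 h2
      nlinarith [sq_nonneg (u * a - v * d), sq_nonneg (u * b - v * e)]
  have : (1:ℝ)/4 ≤ ((u * a - v * d) ^ 2 + (u * b - v * e) ^ 2 + (u - v) ^ 2) / (2 * u * v) := by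
    rw [le_div_iff₀ hD]
    nlinarith
  linarith
end

section
/- Let X = {(2^c a, 2^c b, 2^c) : a, b, c ∈ ℤ} ⊆ U, equipped with the hyperbolic metric d_H. Then X has bounded geometry: for every r > 0 there exists N_r such that for every x ∈ X the set {y ∈ X : d_H(x,y) ≤ r} has cardinality at most N_r. -/
/-! If `d_H(x, y) ≤ r` then `|x - y|² ≤ 2 (eʳ - 1) x₃ y₃`. The vertical part of this bound
pins `y₃ / x₃` between `1 / (2eʳ)` and `2eʳ`, so the scale exponents of `x, y ∈ X` differ by at
most `2eʳ`; at the scale `y₃` the horizontal parts pin the integer coordinates of `y` to within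
`2eʳ` of `x₁ / y₃` and `x₂ / y₃`. Hence every ball of radius `r` in `X` is the image of one fixed
cube of integer triples, under a map depending on the centre. -/

lemma le_exp_of_arcosh_le {t r : ℝ} (ht : 0 < t) (h : arcosh t ≤ r) : t ≤ Real.exp r := by
  have hpos : 0 < t + Real.sqrt (t ^ 2 - 1) := by positivity
  calc t ≤ t + Real.sqrt (t ^ 2 - 1) := le_add_of_nonneg_right (Real.sqrt_nonneg _)
    _ = Real.exp (arcosh t) := (Real.exp_log hpos).symm
    _ ≤ Real.exp r := Real.exp_le_exp.2 h

lemma sq_dist_le_of_dH_le {p q : ℝ × ℝ × ℝ} {r : ℝ} (hp : 0 < p.2.2) (hq : 0 < q.2.2)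
    (h : dH p q ≤ r) :
    (p.1 - q.1) ^ 2 + (p.2.1 - q.2.1) ^ 2 + (p.2.2 - q.2.2) ^ 2 ≤
      2 * (Real.exp r - 1) * p.2.2 * q.2.2 := by
  have hden : 0 < 2 * p.2.2 * q.2.2 := by positivity
  have hexp := le_exp_of_arcosh_le (by positivity) h
  rw [← le_sub_iff_add_le', div_le_iff₀ hden] at hexp
  linarith

lemma le_two_mul_mul_of_sq_sub_le {s t E : ℝ} (hs : 0 < s) (ht : 0 < t)
    (h : (s - t) ^ 2 ≤ 2 * (E - 1) * s * t) : t ≤ 2 * E * s ∧ s ≤ 2 * E * t := by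
  constructor <;> nlinarith [sq_nonneg s, sq_nonneg t]

lemma abs_div_sub_le_of_sq_sub_le {u v s t E : ℝ} (ht : 0 < t) (hE : 1 ≤ E)
    (hst : s ≤ 2 * E * t) (h : (u - t * v) ^ 2 ≤ 2 * (E - 1) * s * t) :
    |u / t - v| ≤ 2 * E := by
  have hsq : (u / t - v) ^ 2 ≤ (2 * E) ^ 2 := by
    have key : (u / t - v) ^ 2 * t ^ 2 = (u - t * v) ^ 2 := by field_simp
    have : (u / t - v) ^ 2 * t ^ 2 ≤ (2 * E) ^ 2 * t ^ 2 := by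
      rw [key]; nlinarith [mul_le_mul_of_nonneg_left hst (by nlinarith : 0 ≤ 2 * (E - 1) * t)]
    exact le_of_mul_le_mul_right this (by positivity)
  exact abs_le_of_sq_le_sq hsq (by linarith)

lemma Int.abs_sub_floor_le_ceil {s R : ℝ} {z : ℤ} (h : |s - z| ≤ R) : |z - ⌊s⌋| ≤ ⌈R⌉ := by
  rw [abs_le] at h ⊢
  have hfl := Int.floor_le s
  have hlt := Int.sub_one_lt_floor s
  constructor
  · have : ((-⌈R⌉ : ℤ) : ℝ) ≤ ((z - ⌊s⌋ : ℤ) : ℝ) := by push_cast; linarith [Int.le_ceil R]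
    exact_mod_cast this
  · rw [← Int.sub_one_lt_iff, Int.lt_ceil]; push_cast; linarith

lemma Int.cast_lt_two_zpow (n : ℤ) : (n : ℝ) < 2 ^ n := by
  rcases Int.eq_nat_or_neg n with ⟨k, rfl | rfl⟩
  · exact_mod_cast Nat.lt_two_pow_self (n := k)
  · have : (0 : ℝ) < 2 ^ (-(k : ℤ)) := by positivity
    push_cast; linarith [(k.cast_nonneg : (0 : ℝ) ≤ k)]

lemma Int.abs_le_ceil_of_two_zpow_le {n : ℤ} {R : ℝ} (h : (2 : ℝ) ^ n ≤ R)
    (h' : (2 : ℝ) ^ (-n) ≤ R) : |n| ≤ ⌈R⌉ := by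
  rw [abs_le, neg_le, Int.le_ceil_iff, Int.le_ceil_iff]
  have := Int.cast_lt_two_zpow n
  have := Int.cast_lt_two_zpow (-n)
  push_cast at *
  constructor <;> linarith

/-- The point of `X` at height `2ᵏ x₃` whose integer coordinates are offset by `(i, j)` from
`⌊x₁ / (2ᵏ x₃)⌋` and `⌊x₂ / (2ᵏ x₃)⌋`. -/
noncomputable def latticeNeighbor (x : ℝ × ℝ × ℝ) (v : ℤ × ℤ × ℤ) : ℝ × ℝ × ℝ :=
  ((2 : ℝ) ^ v.1 * x.2.2 * ↑(v.2.1 + ⌊x.1 / ((2 : ℝ) ^ v.1 * x.2.2)⌋),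
    (2 : ℝ) ^ v.1 * x.2.2 * ↑(v.2.2 + ⌊x.2.1 / ((2 : ℝ) ^ v.1 * x.2.2)⌋),
    (2 : ℝ) ^ v.1 * x.2.2)

noncomputable def intCube (K : ℤ) : Finset (ℤ × ℤ × ℤ) :=
  Finset.Icc (-K) K ×ˢ Finset.Icc (-K) K ×ˢ Finset.Icc (-K) K

lemma mem_image_latticeNeighbor_of_dH_le {x y : ℝ × ℝ × ℝ} {r : ℝ} (hx : x ∈ Xset)
    (hy : y ∈ Xset) (hr : 0 ≤ r) (h : dH x y ≤ r) :
    y ∈ latticeNeighbor x '' intCube ⌈2 * Real.exp r⌉ := by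
  obtain ⟨a, b, c, rfl⟩ := hx
  obtain ⟨a', b', c', rfl⟩ := hy
  set E := Real.exp r
  have hE : 1 ≤ E := Real.one_le_exp hr
  set p := (2 : ℝ) ^ c
  set q := (2 : ℝ) ^ c'
  have hp : 0 < p := by positivity
  have hq : 0 < q := by positivity
  have hd := sq_dist_le_of_dH_le hp hq h
  dsimp only at hd
  obtain ⟨hqp, hpq⟩ := le_two_mul_mul_of_sq_sub_le hp hq
    (by nlinarith [sq_nonneg (p * a - q * a'), sq_nonneg (p * b - q * b')])
  have hk : |c' - c| ≤ ⌈2 * E⌉ := by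
    refine Int.abs_le_ceil_of_two_zpow_le ?_ ?_
    · rwa [zpow_sub₀ two_ne_zero, div_le_iff₀ hp]
    · rwa [neg_sub, zpow_sub₀ two_ne_zero, div_le_iff₀ hq]
  have ha : |a' - ⌊p * a / q⌋| ≤ ⌈2 * E⌉ := Int.abs_sub_floor_le_ceil <|
    abs_div_sub_le_of_sq_sub_le hq hE hpq
      (by nlinarith [sq_nonneg (p - q), sq_nonneg (p * b - q * b')])
  have hb : |b' - ⌊p * b / q⌋| ≤ ⌈2 * E⌉ := Int.abs_sub_floor_le_ceil <|
    abs_div_sub_le_of_sq_sub_le hq hE hpq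
      (by nlinarith [sq_nonneg (p - q), sq_nonneg (p * a - q * a')])
  refine ⟨(c' - c, a' - ⌊p * a / q⌋, b' - ⌊p * b / q⌋), ?_, ?_⟩
  · simp only [Finset.mem_coe, intCube, Finset.mem_product, Finset.mem_Icc]
    exact ⟨abs_le.1 hk, abs_le.1 ha, abs_le.1 hb⟩
  · have hscale : (2 : ℝ) ^ (c' - c) * p = q := by
      rw [zpow_sub₀ two_ne_zero, div_mul_cancel₀ _ hp.ne']
    simp [latticeNeighbor, hscale]

lemma Set.finite_and_ncard_le_of_subset_image {α β : Type*} {s : Set β} {g : α → β}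
    {B : Finset α} (h : s ⊆ g '' B) : s.Finite ∧ s.ncard ≤ B.card := by
  have hfin := B.finite_toSet.image g
  refine ⟨hfin.subset h, ?_⟩
  calc s.ncard ≤ (g '' B).ncard := Set.ncard_le_ncard h hfin
    _ ≤ (B : Set α).ncard := Set.ncard_image_le B.finite_toSet
    _ = B.card := Set.ncard_coe_finset B

/-- The set `X = {(2^c a, 2^c b, 2^c) : a, b, c ∈ ℤ}` has bounded
geometry for the hyperbolic metric: for every `r > 0` there is a uniform bound
`N_r` on the cardinality of closed balls of radius `r` in `X`. -/
theorem Xset_bounded_geometry :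
    ∀ r : ℝ, 0 < r → ∃ N : ℕ, ∀ x ∈ Xset,
      {y | y ∈ Xset ∧ dH x y ≤ r}.Finite ∧
      {y | y ∈ Xset ∧ dH x y ≤ r}.ncard ≤ N := by
  intro r hr
  refine ⟨(intCube ⌈2 * Real.exp r⌉).card, fun x hx => ?_⟩
  exact Set.finite_and_ncard_le_of_subset_image (g := latticeNeighbor x)
    fun y ⟨hy, hxy⟩ => mem_image_latticeNeighbor_of_dH_le hx hy hr.le hxy
end

section
/- Equip X = {(2^c a, 2^c b, 2^c) : a, b, c ∈ ℤ} with the hyperbolic metric d_H. The action of ℤ² on X given by (m,n) · (2^c a, 2^c b, 2^c) = (2^c(a+m), 2^c(b+n), 2^c) is a translation-like action: it is free, and for every (m,n) ∈ ℤ² the set {d_H(x, (m,n) · x) : x ∈ X} is bounded. -/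
/-- The action of `(m, n) ∈ ℤ²` sending `(2^c a, 2^c b, 2^c)` to
`(2^c (a+m), 2^c (b+n), 2^c)`, written in coordinates. -/
def act (v : ℤ × ℤ) (p : ℝ × ℝ × ℝ) : ℝ × ℝ × ℝ :=
  (p.1 + p.2.2 * v.1, p.2.1 + p.2.2 * v.2, p.2.2)

/-- The action of `ℤ²` on `X` given by
`(m,n) · (2^c a, 2^c b, 2^c) = (2^c (a+m), 2^c (b+n), 2^c)` is a
translation-like action for the hyperbolic metric `d_H`: it is a free action
of `ℤ²` on `X`, and every `(m,n) ∈ ℤ²` moves points a bounded hyperbolic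
distance. -/
theorem Z2_translation_like_action_on_Xset :
    -- `act` implements the rule:
    (∀ m n a b c : ℤ,
      act (m, n) ((2 : ℝ) ^ c * a, (2 : ℝ) ^ c * b, (2 : ℝ) ^ c) =
        ((2 : ℝ) ^ c * (a + m), (2 : ℝ) ^ c * (b + n), (2 : ℝ) ^ c)) ∧
    -- it is an action of `ℤ²` on `X`:
    (∀ v : ℤ × ℤ, ∀ p ∈ Xset, act v p ∈ Xset) ∧
    (∀ p ∈ Xset, act (0, 0) p = p) ∧
    (∀ v w : ℤ × ℤ, ∀ p ∈ Xset, act (v + w) p = act v (act w p)) ∧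
    -- the action is free:
    (∀ v : ℤ × ℤ, ∀ p ∈ Xset, act v p = p → v = (0, 0)) ∧
    -- every element moves points a bounded distance:
    (∀ v : ℤ × ℤ, ∃ C : ℝ, ∀ p ∈ Xset, dH p (act v p) ≤ C) := by
  refine ⟨?_, ?_, ?_, ?_, ?_, ?_⟩
  · intro m n a b c
    simp only [act, Prod.mk.injEq]
    push_cast
    exact ⟨by ring, by ring, trivial⟩
  · rintro ⟨m, n⟩ p ⟨a, b, c, rfl⟩
    exact ⟨a + m, b + n, c, by simp only [act]; push_cast; refine Prod.ext (by ring) (Prod.ext (by ring) rfl)⟩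
  · rintro p ⟨a, b, c, rfl⟩
    simp [act]
  · rintro ⟨m, n⟩ ⟨m', n'⟩ p ⟨a, b, c, rfl⟩
    simp only [act, Prod.mk.injEq, Prod.fst_add, Prod.snd_add]
    push_cast
    exact ⟨by ring, by ring, trivial⟩
  · rintro ⟨m, n⟩ p ⟨a, b, c, rfl⟩ h
    have hz : (0:ℝ) < (2:ℝ) ^ c := zpow_pos (by norm_num) c
    simp only [act, Prod.mk.injEq] at h
    obtain ⟨h1, h2, -⟩ := h
    have hm : ((m:ℝ)) = 0 := by
      have := h1
      nlinarith [hz]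
    have hn : ((n:ℝ)) = 0 := by nlinarith [hz]
    have : m = 0 := by exact_mod_cast hm
    have : n = 0 := by exact_mod_cast hn
    simp_all
  · rintro ⟨m, n⟩
    refine ⟨arcosh (1 + ((m:ℝ) ^ 2 + (n:ℝ) ^ 2) / 2), ?_⟩
    rintro p ⟨a, b, c, rfl⟩
    have hz : (0:ℝ) < (2:ℝ) ^ c := zpow_pos (by norm_num) c
    have hz' : ((2:ℝ) ^ c) ≠ 0 := ne_of_gt hz
    have : dH ((2 : ℝ) ^ c * a, (2 : ℝ) ^ c * b, (2 : ℝ) ^ c)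
        (act (m, n) ((2 : ℝ) ^ c * a, (2 : ℝ) ^ c * b, (2 : ℝ) ^ c)) =
        arcosh (1 + ((m:ℝ) ^ 2 + (n:ℝ) ^ 2) / 2) := by
      simp only [dH, act]
      congr 1
      field_simp
      ring
    rw [this]
end

section
/- Let Y be any metric space that is bilipschitz equivalent to the space X = {(2^c a, 2^c b, 2^c) : a, b, c ∈ ℤ} equipped with the hyperbolic metric d_H, i.e., there exists a bilipschitz bijection ψ : X → Y. Then ℤ² acts translation-like on Y. -/
/-- Translation action of `ℤ²` on `Xset`. -/
def Ttrans (v : ℤ × ℤ) (x : Xset) : Xset :=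
  ⟨(x.1.1 + x.1.2.2 * v.1, x.1.2.1 + x.1.2.2 * v.2, x.1.2.2), by
    obtain ⟨a, b, c, h⟩ := x.2
    refine ⟨a + v.1, b + v.2, c, ?_⟩
    simp only [h]
    push_cast
    exact Prod.ext (by ring) (Prod.ext (by ring) rfl)⟩

lemma Xset_pos (x : Xset) : 0 < x.1.2.2 := by
  obtain ⟨a, b, c, h⟩ := x.2
  rw [h]
  positivity

/-- If a metric space `Y` is bilipschitz equivalent to
`(X, d_H)`, i.e. there is a bilipschitz bijection `ψ : X → Y`, then `ℤ²` acts
translation-like on `Y`: there is an action of `ℤ²` on `Y` which is free and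
in which every element moves points a bounded distance. -/
theorem Z2_translation_like_on_bilipschitz_image
    {Y : Type*} [MetricSpace Y]
    (ψ : Xset → Y) (hbij : Function.Bijective ψ)
    (K : ℝ) (hK : 1 ≤ K)
    (hbilip : ∀ x x' : Xset,
      (1 / K) * dH (x : ℝ × ℝ × ℝ) (x' : ℝ × ℝ × ℝ) ≤ dist (ψ x) (ψ x') ∧
      dist (ψ x) (ψ x') ≤ K * dH (x : ℝ × ℝ × ℝ) (x' : ℝ × ℝ × ℝ)) :
    ∃ μ : ℤ × ℤ → Y → Y,
      -- `μ` is an action of `ℤ²` on `Y`: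
      (∀ y : Y, μ (0, 0) y = y) ∧
      (∀ v w : ℤ × ℤ, ∀ y : Y, μ (v + w) y = μ v (μ w y)) ∧
      -- the action is free:
      (∀ v : ℤ × ℤ, ∀ y : Y, μ v y = y → v = (0, 0)) ∧
      -- every element moves points a bounded distance:
      (∀ v : ℤ × ℤ, ∃ C : ℝ, ∀ y : Y, dist y (μ v y) ≤ C) := by
  set e : Xset ≃ Y := Equiv.ofBijective ψ hbij with he
  refine ⟨fun v y => e (Ttrans v (e.symm y)), ?_, ?_, ?_, ?_⟩
  · intro y
    show e (Ttrans (0, 0) (e.symm y)) = y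
    have : Ttrans (0, 0) (e.symm y) = e.symm y := by
      apply Subtype.ext
      simp [Ttrans]
    rw [this, Equiv.apply_symm_apply]
  · intro v w y
    show e (Ttrans (v + w) (e.symm y)) = e (Ttrans v (e.symm (e (Ttrans w (e.symm y)))))
    rw [Equiv.symm_apply_apply]
    congr 1
    apply Subtype.ext
    simp only [Ttrans, Prod.fst_add, Prod.snd_add]
    push_cast
    exact Prod.ext (by ring) (Prod.ext (by ring) rfl)
  · intro v y hv
    have h1 : Ttrans v (e.symm y) = e.symm y := by
      apply e.injective
      rw [show e (Ttrans v (e.symm y)) = y from hv, Equiv.apply_symm_apply]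
    have h2 := congrArg (fun z : Xset => z.1) h1
    have hpos := Xset_pos (e.symm y)
    simp only [Ttrans] at h2
    have hne : (e.symm y).1.2.2 ≠ 0 := ne_of_gt hpos
    have hv1 : v.1 = 0 := by
      have := congrArg Prod.fst h2
      simp [hne] at this
      exact this
    have hv2 : v.2 = 0 := by
      have := congrArg (fun p : ℝ × ℝ × ℝ => p.2.1) h2
      simp [hne] at this
      exact this
    exact Prod.ext hv1 hv2
  · intro v
    refine ⟨K * arcosh (1 + ((v.1 : ℝ) ^ 2 + (v.2 : ℝ) ^ 2) / 2), ?_⟩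
    intro y
    set x := e.symm y with hx
    have hd : dH (x : ℝ × ℝ × ℝ) ((Ttrans v x : Xset) : ℝ × ℝ × ℝ)
        = arcosh (1 + ((v.1 : ℝ) ^ 2 + (v.2 : ℝ) ^ 2) / 2) := by
      have hne : (x : ℝ × ℝ × ℝ).2.2 ≠ 0 := ne_of_gt (Xset_pos x)
      simp only [dH, Ttrans]
      congr 1
      congr 1
      field_simp
      ring
    have hb := (hbilip x (Ttrans v x)).2
    have : dist y (e (Ttrans v x)) = dist (ψ x) (ψ (Ttrans v x)) := by
      have : y = ψ x := by
        rw [hx]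
        exact (Equiv.apply_symm_apply e y).symm
      rw [this]
      rfl
    rw [this]
    calc dist (ψ x) (ψ (Ttrans v x))
        ≤ K * dH (x : ℝ × ℝ × ℝ) ((Ttrans v x : Xset) : ℝ × ℝ × ℝ) := hb
      _ = K * arcosh (1 + ((v.1 : ℝ) ^ 2 + (v.2 : ℝ) ^ 2) / 2) := by rw [hd]
end

section
/- Let G be a finitely generated group equipped with a word metric for a finite generating set, and suppose that G (with its word metric) is bilipschitz equivalent to the space X = {(2^c a, 2^c b, 2^c) : a, b, c ∈ ℤ} equipped with the hyperbolic metric d_H. Then ℤ² acts translation-like on G. -/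
/-- The word length of `g` with respect to a generating set `S`: the minimal
length of a word in `S ∪ S⁻¹` representing `g`. -/
noncomputable def wordLength {G : Type*} [Group G] (S : Set G) (g : G) : ℕ :=
  sInf {n : ℕ | ∃ l : List G, (∀ x ∈ l, x ∈ S ∨ x⁻¹ ∈ S) ∧ l.prod = g ∧ l.length = n}

/-- The word metric on `G` with respect to a generating set `S`. -/
noncomputable def wordDist {G : Type*} [Group G] (S : Set G) (g₁ g₂ : G) : ℝ :=
  (wordLength S (g₁⁻¹ * g₂) : ℝ)

/-!
`ℤ²` acts on `X` by `(x, y, t) ↦ (x + t a, y + t b, t)`: the integer translations of each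
horosphere `{t = 2^c}`, scaled to its height. The action is free, and since
`d_H((x, y, t), (x + t a, y + t b, t)) = arccosh (1 + (a² + b²) / 2)` does not depend on the
point, every element moves all points of `X` by the same hyperbolic distance. Transporting the
action to `G` along `ψ`, the upper Lipschitz bound turns this into a uniform bound in the word
metric.
-/

lemma height_ne_zero_of_mem_Xset {p : ℝ × ℝ × ℝ} (hp : p ∈ Xset) : p.2.2 ≠ 0 := by
  obtain ⟨a, b, c, rfl⟩ := hp
  exact zpow_ne_zero c two_ne_zero

def horoTranslate (v : ℤ × ℤ) (p : ℝ × ℝ × ℝ) : ℝ × ℝ × ℝ :=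
  (p.1 + p.2.2 * v.1, p.2.1 + p.2.2 * v.2, p.2.2)

lemma horoTranslate_zero (p : ℝ × ℝ × ℝ) : horoTranslate 0 p = p := by
  simp [horoTranslate]

lemma horoTranslate_add (v w : ℤ × ℤ) (p : ℝ × ℝ × ℝ) :
    horoTranslate (v + w) p = horoTranslate v (horoTranslate w p) := by
  simp only [horoTranslate, Prod.fst_add, Prod.snd_add, Int.cast_add, Prod.mk.injEq, and_true]
  constructor <;> ring

lemma eq_zero_of_horoTranslate_eq_self {v : ℤ × ℤ} {p : ℝ × ℝ × ℝ} (hp : p.2.2 ≠ 0)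
    (h : horoTranslate v p = p) : v = 0 := by
  simp only [horoTranslate, Prod.ext_iff, add_eq_left, mul_eq_zero, hp, false_or,
    Int.cast_eq_zero, and_true] at h
  exact Prod.ext h.1 h.2

lemma dH_horoTranslate (v : ℤ × ℤ) {p : ℝ × ℝ × ℝ} (hp : p.2.2 ≠ 0) :
    dH p (horoTranslate v p) = arcosh (1 + ((v.1 : ℝ) ^ 2 + (v.2 : ℝ) ^ 2) / 2) := by
  rw [dH, horoTranslate]
  congr 2
  field_simp
  ring

lemma horoTranslate_mem_Xset (v : ℤ × ℤ) {p : ℝ × ℝ × ℝ} (hp : p ∈ Xset) :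
    horoTranslate v p ∈ Xset := by
  obtain ⟨a, b, c, rfl⟩ := hp
  refine ⟨a + v.1, b + v.2, c, ?_⟩
  simp only [horoTranslate, Int.cast_add, Prod.mk.injEq, and_true]
  constructor <;> ring

instance : AddAction (ℤ × ℤ) Xset where
  vadd v x := ⟨horoTranslate v x, horoTranslate_mem_Xset v x.2⟩
  zero_vadd x := Subtype.ext (horoTranslate_zero x)
  add_vadd v w x := Subtype.ext (horoTranslate_add v w x)

lemma Xset.eq_zero_of_vadd_eq_self {v : ℤ × ℤ} {x : Xset} (h : v +ᵥ x = x) : v = 0 :=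
  eq_zero_of_horoTranslate_eq_self (height_ne_zero_of_mem_Xset x.2) (congrArg Subtype.val h)

lemma Xset.dH_vadd (v : ℤ × ℤ) (x : Xset) :
    dH x ↑(v +ᵥ x) = arcosh (1 + ((v.1 : ℝ) ^ 2 + (v.2 : ℝ) ^ 2) / 2) :=
  dH_horoTranslate v (height_ne_zero_of_mem_Xset x.2)

theorem Z2_translation_like_on_group_bilipschitz_to_Xset_general
    {G : Type*} [Group G] (S : Finset G)
    (ψ : Xset → G) (hbij : Function.Bijective ψ)
    (K : ℝ)
    (hbilip : ∀ x x' : Xset,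
      (1 / K) * dH (x : ℝ × ℝ × ℝ) (x' : ℝ × ℝ × ℝ) ≤
        wordDist (S : Set G) (ψ x) (ψ x') ∧
      wordDist (S : Set G) (ψ x) (ψ x') ≤
        K * dH (x : ℝ × ℝ × ℝ) (x' : ℝ × ℝ × ℝ)) :
    ∃ μ : ℤ × ℤ → G → G,
      -- `μ` is an action of `ℤ²` on `G`:
      (∀ g : G, μ (0, 0) g = g) ∧
      (∀ v w : ℤ × ℤ, ∀ g : G, μ (v + w) g = μ v (μ w g)) ∧
      -- the action is free:
      (∀ v : ℤ × ℤ, ∀ g : G, μ v g = g → v = (0, 0)) ∧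
      -- every element moves points a bounded distance:
      (∀ v : ℤ × ℤ, ∃ C : ℝ, ∀ g : G, wordDist (S : Set G) g (μ v g) ≤ C) := by
  let e : G ≃ Xset := (Equiv.ofBijective ψ hbij).symm
  let _ : AddAction (ℤ × ℤ) G := e.addAction (ℤ × ℤ)
  have hvadd (v : ℤ × ℤ) (x : Xset) : v +ᵥ ψ x = ψ (v +ᵥ x) := by
    simp [Equiv.vadd_def, e]
  refine ⟨(· +ᵥ ·), zero_vadd _, add_vadd, fun v g hv => ?_, fun v => ?_⟩
  · obtain ⟨x, rfl⟩ := hbij.2 g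
    exact Xset.eq_zero_of_vadd_eq_self (hbij.1 ((hvadd v x).symm.trans hv))
  · refine ⟨K * arcosh (1 + ((v.1 : ℝ) ^ 2 + (v.2 : ℝ) ^ 2) / 2), fun g => ?_⟩
    obtain ⟨x, rfl⟩ := hbij.2 g
    simpa only [hvadd, Xset.dH_vadd] using (hbilip x (v +ᵥ x)).2

/-- If a finitely generated group `G`, with the word metric of a
finite generating set `S`, is bilipschitz equivalent to `(X, d_H)`, then `ℤ²`
acts translation-like on `G`: there is an action of `ℤ²` on `G` which is free
and in which every element moves points a bounded distance in the word
metric. -/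
theorem Z2_translation_like_on_group_bilipschitz_to_Xset
    {G : Type*} [Group G] (S : Finset G)
    (hSgen : Subgroup.closure (S : Set G) = ⊤)
    (ψ : Xset → G) (hbij : Function.Bijective ψ)
    (K : ℝ) (hK : 1 ≤ K)
    (hbilip : ∀ x x' : Xset,
      (1 / K) * dH (x : ℝ × ℝ × ℝ) (x' : ℝ × ℝ × ℝ) ≤
        wordDist (S : Set G) (ψ x) (ψ x') ∧
      wordDist (S : Set G) (ψ x) (ψ x') ≤
        K * dH (x : ℝ × ℝ × ℝ) (x' : ℝ × ℝ × ℝ)) :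
    ∃ μ : ℤ × ℤ → G → G,
      -- `μ` is an action of `ℤ²` on `G`:
      (∀ g : G, μ (0, 0) g = g) ∧
      (∀ v w : ℤ × ℤ, ∀ g : G, μ (v + w) g = μ v (μ w g)) ∧
      -- the action is free:
      (∀ v : ℤ × ℤ, ∀ g : G, μ v g = g → v = (0, 0)) ∧
      -- every element moves points a bounded distance:
      (∀ v : ℤ × ℤ, ∃ C : ℝ, ∀ g : G, wordDist (S : Set G) g (μ v g) ≤ C) :=
  Z2_translation_like_on_group_bilipschitz_to_Xset_general S ψ hbij K hbilip
end
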